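/- The function $\phi(x,y) = e^{-\sqrt{x^2+y^2}}$ on $\mathbb{R}^2$ belongs to the Sobolev space $H^s(\mathbb{R}^2)$ for every $0 < s < 2$. -/

import Mathlib

/-!
Bochner subordination writes `e^{-‖x‖}` as a superposition of Gaussians,
`e^{-c} = π^{-1/2} ∫₀^∞ u^{-1/2} e^{-u} e^{-c²/(4u)} du`; after `u = t²` this follows from the
Cauchy–Schlömilch identity `∫₀^∞ g(t - a/t) dt = ½ ∫_ℝ g` (for even `g`) with `g(x) = e^{-x²}`.
Transforming each Gaussian and integrating in `u` (a Gamma integral) gives, on `ℝⁿ`,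
`𝓕φ(ζ) = c_n (1 + 4π²‖ζ‖²)^{-(n+1)/2}`, so `(1 + ‖ζ‖²)^s |𝓕φ(ζ)|² ≲ (1 + ‖ζ‖²)^{s-n-1}`,
which is integrable as soon as `s < n/2 + 1`; for `n = 2` this is `s < 2`.
-/

open MeasureTheory FourierTransform

open Set Real Module

section CauchySchlomilch

variable {E : Type*} [NormedAddCommGroup E] [NormedSpace ℝ E] {a : ℝ}

lemma hasDerivAt_const_div (a : ℝ) {t : ℝ} (ht : t ≠ 0) :
    HasDerivAt (fun t => a / t) (-(a / t ^ 2)) t := by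
  simpa [div_eq_mul_inv] using (hasDerivAt_inv ht).const_mul a

lemma hasDerivAt_sub_div (a : ℝ) {t : ℝ} (ht : t ≠ 0) :
    HasDerivAt (fun t => t - a / t) (1 + a / t ^ 2) t := by
  simpa [Pi.sub_def] using (hasDerivAt_id' t).sub (hasDerivAt_const_div a ht)

lemma strictMonoOn_sub_div (ha : 0 ≤ a) : StrictMonoOn (fun t => t - a / t) (Ioi 0) := by
  intro x hx y _ hxy
  have : a / y ≤ a / x := div_le_div_of_nonneg_left ha hx hxy.le
  dsimp only
  linarith

lemma image_sub_div_Ioi (ha : 0 < a) : (fun t => t - a / t) '' Ioi 0 = univ := by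
  refine eq_univ_of_forall fun u => ⟨(u + √(u ^ 2 + 4 * a)) / 2, ?_, ?_⟩
  · have : |u| < √(u ^ 2 + 4 * a) := by
      rw [← sqrt_sq_eq_abs]; exact sqrt_lt_sqrt (sq_nonneg u) (by linarith)
    rw [mem_Ioi]
    linarith [neg_abs_le u]
  · have hd : √(u ^ 2 + 4 * a) ^ 2 = u ^ 2 + 4 * a := sq_sqrt (by positivity)
    have : u + √(u ^ 2 + 4 * a) ≠ 0 := by
      intro h
      rw [show √(u ^ 2 + 4 * a) = -u by linarith, neg_sq] at hd
      linarith
    field_simp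
    nlinarith

lemma image_div_Ioi (ha : 0 < a) : (fun t => a / t) '' Ioi 0 = Ioi 0 := by
  refine Subset.antisymm (image_subset_iff.2 fun t ht => div_pos ha ht) fun y hy => ?_
  exact ⟨a / y, div_pos ha hy, div_div_cancel₀ ha.ne'⟩

lemma integral_div_sq_smul_comp_div_Ioi (ha : 0 < a) (g : ℝ → E) :
    ∫ t in Ioi 0, (a / t ^ 2) • g (a / t) = ∫ t in Ioi 0, g t := by
  have hinj : InjOn (fun t => a / t) (Ioi 0) := fun x _ y _ h => by
    simpa [div_eq_mul_inv, ha.ne'] using h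
  conv_rhs => rw [← image_div_Ioi ha, integral_image_eq_integral_abs_deriv_smul measurableSet_Ioi
    (fun t ht => (hasDerivAt_const_div a (ne_of_gt ht)).hasDerivWithinAt) hinj]
  refine setIntegral_congr_fun measurableSet_Ioi fun t ht => ?_
  rw [abs_neg, abs_of_pos (div_pos ha (pow_pos ht 2))]

/-- Substituting `x = t - a/t` gives `∫ g = ∫_{t>0} (1 + a/t²) g(t - a/t)`, and the reflection
`t ↦ a/t`, with `g` even, shows that the two halves of the right-hand side are equal. -/
theorem integral_comp_sub_div_Ioi {g : ℝ → E} (hg : Integrable g)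
    (hg_even : ∀ x, g (-x) = g x) (ha : 0 < a) :
    ∫ t in Ioi 0, g (t - a / t) = (2 : ℝ)⁻¹ • ∫ x, g x := by
  have hderiv (t : ℝ) (ht : t ∈ Ioi 0) :
      HasDerivWithinAt (fun t => t - a / t) (1 + a / t ^ 2) (Ioi 0) t :=
    (hasDerivAt_sub_div a (ne_of_gt ht)).hasDerivWithinAt
  have hinj := (strictMonoOn_sub_div ha.le).injOn
  have hjac (t : ℝ) (ht : t ∈ Ioi 0) : 1 ≤ 1 + a / t ^ 2 :=
    le_add_of_nonneg_right (div_nonneg ha.le (sq_nonneg t))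
  have hsubst : ∫ x, g x = ∫ t in Ioi 0, (1 + a / t ^ 2) • g (t - a / t) := by
    rw [← setIntegral_univ, ← image_sub_div_Ioi ha,
      integral_image_eq_integral_abs_deriv_smul measurableSet_Ioi hderiv hinj]
    refine setIntegral_congr_fun measurableSet_Ioi fun t ht => ?_
    rw [abs_of_pos (by linarith [hjac t ht])]
  have hint_jac : IntegrableOn (fun t => (1 + a / t ^ 2) • g (t - a / t)) (Ioi 0) := by
    have := (integrableOn_image_iff_integrableOn_abs_deriv_smul measurableSet_Ioi hderiv hinj
      g).1 (by rw [image_sub_div_Ioi ha]; exact hg.integrableOn)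
    refine this.congr_fun (fun t ht => ?_) measurableSet_Ioi
    dsimp only
    rw [abs_of_pos (by linarith [hjac t ht])]
  have hint : IntegrableOn (fun t => g (t - a / t)) (Ioi 0) := by
    refine Integrable.mono' (Integrable.norm hint_jac) ?_ ?_
    · have hc : Measurable fun t : ℝ => (1 + a / t ^ 2)⁻¹ := by fun_prop
      refine (hc.aestronglyMeasurable.smul hint_jac.aestronglyMeasurable).congr ?_
      filter_upwards [ae_restrict_mem measurableSet_Ioi] with t ht
      exact inv_smul_smul₀ (by linarith [hjac t ht]) _
    · filter_upwards [ae_restrict_mem measurableSet_Ioi] with t ht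
      rw [norm_smul, Real.norm_of_nonneg (by linarith [hjac t ht])]
      exact le_mul_of_one_le_left (norm_nonneg _) (hjac t ht)
  have hint_rest : IntegrableOn (fun t => (a / t ^ 2) • g (t - a / t)) (Ioi 0) :=
    (hint_jac.sub hint).congr_fun (fun t _ => by simp [add_smul]) measurableSet_Ioi
  have hreflect : ∫ t in Ioi 0, (a / t ^ 2) • g (t - a / t) = ∫ t in Ioi 0, g (t - a / t) := by
    rw [← integral_div_sq_smul_comp_div_Ioi ha (fun t => g (t - a / t))]
    refine setIntegral_congr_fun measurableSet_Ioi fun t _ => ?_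
    rw [div_div_cancel₀ ha.ne', ← hg_even, neg_sub]
  rw [hsubst]
  simp only [add_smul, one_smul]
  rw [integral_add hint hint_rest, hreflect, ← two_smul ℝ, smul_smul]
  norm_num

end CauchySchlomilch

lemma integral_exp_neg_sub_div_sq_Ioi {a : ℝ} (ha : 0 ≤ a) :
    ∫ t in Ioi 0, exp (-(t - a / t) ^ 2) = √π / 2 := by
  rcases ha.eq_or_lt with rfl | ha
  · simpa using integral_gaussian_Ioi 1
  · have hg : Integrable fun x : ℝ => exp (-x ^ 2) := by
      simpa using integrable_exp_neg_mul_sq one_pos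
    rw [integral_comp_sub_div_Ioi hg (fun x => by simp) ha]
    simpa [div_eq_inv_mul] using integral_gaussian 1

theorem integral_rpow_neg_half_mul_exp_neg_mul_exp_Ioi {c : ℝ} (hc : 0 ≤ c) :
    ∫ u in Ioi 0, u ^ (-(1 / 2 : ℝ)) * exp (-u) * exp (-(4 * u)⁻¹ * c ^ 2) = √π * exp (-c) := by
  rw [← integral_comp_rpow_Ioi_of_pos two_pos]
  have hpt (t : ℝ) (ht : t ∈ Ioi 0) :
      ((2 : ℝ) * t ^ ((2 : ℝ) - 1)) • ((t ^ (2 : ℝ)) ^ (-(1 / 2 : ℝ)) * exp (-t ^ (2 : ℝ)) *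
        exp (-(4 * t ^ (2 : ℝ))⁻¹ * c ^ 2)) = 2 * exp (-c) * exp (-(t - c / 2 / t) ^ 2) := by
    have ht : 0 < t := ht
    have hinv : (t ^ (2 : ℝ)) ^ (-(1 / 2 : ℝ)) = t⁻¹ := by
      rw [← rpow_mul ht.le]; norm_num; exact rpow_neg_one t
    rw [hinv, rpow_two, show (2 : ℝ) - 1 = 1 by norm_num, rpow_one, smul_eq_mul]
    have hexp : exp (-t ^ 2) * exp (-(4 * t ^ 2)⁻¹ * c ^ 2) =
        exp (-c) * exp (-(t - c / 2 / t) ^ 2) := by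
      rw [← exp_add, ← exp_add]; congr 1; field_simp; ring
    rw [mul_assoc t⁻¹, hexp]
    field_simp
  rw [setIntegral_congr_fun measurableSet_Ioi hpt, integral_const_mul,
    integral_exp_neg_sub_div_sq_Ioi (by positivity)]
  ring

lemma rpow_neg_half_mul_mul_rpow {u : ℝ} (hu : 0 < u) {c : ℝ} (hc : 0 ≤ c) (n : ℝ) :
    u ^ (-(1 / 2 : ℝ)) * (c * u) ^ (n / 2) = c ^ (n / 2) * u ^ ((n + 1) / 2 - 1) := by
  rw [mul_rpow hc hu.le, mul_left_comm, ← rpow_add hu]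
  ring_nf

section Subordination

variable {V : Type*} [NormedAddCommGroup V]

/-- Bochner's subordination kernel: Gaussians in `v` whose superposition over `u > 0` is
`e^{-‖v‖}`. -/
noncomputable def subordinatedGaussian (u : ℝ) (v : V) : ℝ :=
  (√π)⁻¹ * (u ^ (-(1 / 2 : ℝ)) * exp (-u)) * exp (-(4 * u)⁻¹ * ‖v‖ ^ 2)

lemma subordinatedGaussian_nonneg {u : ℝ} (hu : 0 ≤ u) (v : V) : 0 ≤ subordinatedGaussian u v := by
  unfold subordinatedGaussian; positivity

lemma integral_subordinatedGaussian_Ioi (v : V) :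
    ∫ u in Ioi 0, subordinatedGaussian u v = exp (-‖v‖) := by
  simp only [subordinatedGaussian, mul_assoc, integral_const_mul]
  simp only [← mul_assoc, integral_rpow_neg_half_mul_exp_neg_mul_exp_Ioi (norm_nonneg v)]
  field_simp

end Subordination

section FourierExpNegNorm

variable {V : Type*} [NormedAddCommGroup V] [InnerProductSpace ℝ V] [FiniteDimensional ℝ V]
  [MeasurableSpace V] [BorelSpace V]

theorem fourier_integral_eq_integral_fourier {α : Type*} [MeasurableSpace α] {μ : Measure α}
    [SFinite μ] {F : α → V → ℂ} (hF : Integrable (Function.uncurry F) (μ.prod volume)) (w : V) :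
    𝓕 (fun v => ∫ a, F a v ∂μ) w = ∫ a, 𝓕 (F a) w ∂μ := by
  simp only [Real.fourier_eq', smul_eq_mul, ← integral_const_mul]
  refine integral_integral_swap (hF.swap.bdd_mul (c := 1) ?_ ?_)
  · exact (by fun_prop : Measurable fun p : V × α =>
      Complex.exp (↑(-2 * π * inner ℝ p.1 w) * Complex.I)).aestronglyMeasurable
  · exact Filter.Eventually.of_forall fun p => (Complex.norm_exp_ofReal_mul_I _).le

lemma integrable_exp_neg_mul_sq_norm {b : ℝ} (hb : 0 < b) :
    Integrable fun v : V => exp (-b * ‖v‖ ^ 2) :=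
  Integrable.of_integral_ne_zero <| by
    rw [GaussianFourier.integral_rexp_neg_mul_sq_norm hb]; positivity

lemma fourier_ofReal_exp_neg_mul_sq_norm {b : ℝ} (hb : 0 < b) (w : V) :
    𝓕 (fun v : V => (exp (-b * ‖v‖ ^ 2) : ℂ)) w =
      ((π / b) ^ (finrank ℝ V / 2 : ℝ) * exp (-π ^ 2 * ‖w‖ ^ 2 / b) : ℝ) := by
  have h := fourier_gaussian_innerProductSpace (V := V) (b := b) (by simpa using hb) w
  push_cast at h ⊢
  rw [h, Complex.ofReal_cpow (by positivity)]
  push_cast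
  rfl

lemma integral_subordinatedGaussian {u : ℝ} (hu : 0 < u) :
    ∫ v : V, subordinatedGaussian u v =
      (4 * π) ^ (finrank ℝ V / 2 : ℝ) / √π *
        (exp (-u) * u ^ (((finrank ℝ V : ℝ) + 1) / 2 - 1)) := by
  simp only [subordinatedGaussian]
  rw [integral_const_mul, GaussianFourier.integral_rexp_neg_mul_sq_norm (by positivity),
    show π / (4 * u)⁻¹ = 4 * π * u by field_simp, mul_assoc, mul_right_comm _ (exp (-u)),
    rpow_neg_half_mul_mul_rpow hu (by positivity)]
  ring

lemma fourier_subordinatedGaussian {u : ℝ} (hu : 0 < u) (w : V) :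
    𝓕 (fun v : V => (subordinatedGaussian u v : ℂ)) w =
      ((4 * π) ^ (finrank ℝ V / 2 : ℝ) / √π *
        (u ^ (((finrank ℝ V : ℝ) + 1) / 2 - 1) * exp (-((1 + 4 * π ^ 2 * ‖w‖ ^ 2) * u))) : ℝ) := by
  have hF : 𝓕 (fun v : V => (subordinatedGaussian u v : ℂ)) w =
      ((√π)⁻¹ * (u ^ (-(1 / 2 : ℝ)) * exp (-u)) : ℝ) *
        𝓕 (fun v : V => (exp (-(4 * u)⁻¹ * ‖v‖ ^ 2) : ℂ)) w := by
    simp only [Real.fourier_eq', smul_eq_mul, subordinatedGaussian, ← integral_const_mul]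
    congr 1 with v
    push_cast
    ring
  have hexp : exp (-u) * exp (-π ^ 2 * ‖w‖ ^ 2 / (4 * u)⁻¹) =
      exp (-((1 + 4 * π ^ 2 * ‖w‖ ^ 2) * u)) := by
    rw [← exp_add]; congr 1; field_simp; ring
  rw [hF, fourier_ofReal_exp_neg_mul_sq_norm (by positivity), ← Complex.ofReal_mul,
    show π / (4 * u)⁻¹ = 4 * π * u by field_simp]
  congr 1
  calc _ = (√π)⁻¹ * (u ^ (-(1 / 2 : ℝ)) * (4 * π * u) ^ ((finrank ℝ V : ℝ) / 2)) *
        (exp (-u) * exp (-π ^ 2 * ‖w‖ ^ 2 / (4 * u)⁻¹)) := by ring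
    _ = _ := by rw [rpow_neg_half_mul_mul_rpow hu (by positivity), hexp]; ring

lemma integrable_uncurry_subordinatedGaussian :
    Integrable (Function.uncurry (subordinatedGaussian (V := V)))
      ((volume.restrict (Ioi 0)).prod volume) := by
  have hmeas : Measurable (Function.uncurry (subordinatedGaussian (V := V))) := by
    unfold subordinatedGaussian
    fun_prop
  refine (integrable_prod_iff hmeas.aestronglyMeasurable).2 ⟨?_, ?_⟩
  · filter_upwards [ae_restrict_mem measurableSet_Ioi] with u hu
    simp only [Function.uncurry_apply_pair, subordinatedGaussian]
    exact (integrable_exp_neg_mul_sq_norm (inv_pos.2 (mul_pos four_pos hu))).const_mul _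
  · refine IntegrableOn.congr_fun ((GammaIntegral_convergent (s := ((finrank ℝ V : ℝ) + 1) / 2)
      (by positivity)).const_mul ((4 * π) ^ ((finrank ℝ V : ℝ) / 2) / √π)) (fun u hu => ?_)
      measurableSet_Ioi
    simp only [Function.uncurry_apply_pair]
    rw [← integral_subordinatedGaussian hu]
    exact integral_congr_ae (Filter.Eventually.of_forall fun v =>
      (norm_of_nonneg (subordinatedGaussian_nonneg (le_of_lt hu) v)).symm)

theorem fourier_ofReal_exp_neg_norm (w : V) :
    𝓕 (fun v : V => (exp (-‖v‖) : ℂ)) w =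
      ((4 * π) ^ (finrank ℝ V / 2 : ℝ) * Gamma (((finrank ℝ V : ℝ) + 1) / 2) / √π *
        (1 + 4 * π ^ 2 * ‖w‖ ^ 2) ^ (-(((finrank ℝ V : ℝ) + 1) / 2 : ℝ)) : ℝ) := by
  have hA : 0 < 1 + 4 * π ^ 2 * ‖w‖ ^ 2 := by positivity
  simp only [← integral_subordinatedGaussian_Ioi, ← integral_complex_ofReal]
  rw [fourier_integral_eq_integral_fourier integrable_uncurry_subordinatedGaussian.ofReal,
    setIntegral_congr_fun measurableSet_Ioi fun u hu => fourier_subordinatedGaussian hu w,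
    integral_complex_ofReal, integral_const_mul,
    integral_rpow_mul_exp_neg_mul_Ioi (by positivity) hA, one_div, inv_rpow hA.le,
    ← rpow_neg hA.le]
  ring_nf

theorem integrable_one_add_norm_sq_rpow_mul_sq_norm_fourier_exp_neg_norm {s : ℝ}
    (hs : s < finrank ℝ V / 2 + 1) :
    Integrable fun w : V => (1 + ‖w‖ ^ 2) ^ s * ‖𝓕 (fun v : V => (exp (-‖v‖) : ℂ)) w‖ ^ 2 := by
  generalize hn : (finrank ℝ V : ℝ) = n at hs
  have hn0 : 0 ≤ n := hn ▸ Nat.cast_nonneg _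
  set C : ℝ := (4 * π) ^ (n / 2) * Gamma ((n + 1) / 2) / √π with hC
  have hF : (fun w : V => (1 + ‖w‖ ^ 2) ^ s * ‖𝓕 (fun v : V => (exp (-‖v‖) : ℂ)) w‖ ^ 2) =
      fun w => C ^ 2 * ((1 + ‖w‖ ^ 2) ^ s * (1 + 4 * π ^ 2 * ‖w‖ ^ 2) ^ (-(n + 1))) := by
    funext w
    rw [fourier_ofReal_exp_neg_norm, hn, ← hC, Complex.norm_real, norm_eq_abs, sq_abs, mul_pow,
      ← rpow_mul_natCast (by positivity)]
    ring_nf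
  have hbound (w : V) :
      (1 + ‖w‖ ^ 2) ^ s * (1 + 4 * π ^ 2 * ‖w‖ ^ 2) ^ (-(n + 1)) ≤
        (1 + ‖w‖ ^ 2) ^ (-(2 * (n + 1 - s)) / 2) := by
    have hπ : 1 ≤ 4 * π ^ 2 := by nlinarith [pi_gt_three]
    calc (1 + ‖w‖ ^ 2) ^ s * (1 + 4 * π ^ 2 * ‖w‖ ^ 2) ^ (-(n + 1))
        ≤ (1 + ‖w‖ ^ 2) ^ s * (1 + ‖w‖ ^ 2) ^ (-(n + 1)) := by
          refine mul_le_mul_of_nonneg_left (rpow_le_rpow_of_nonpos (by positivity) ?_ (by linarith))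
            (by positivity)
          nlinarith [sq_nonneg ‖w‖]
      _ = _ := by
          rw [← rpow_add (by positivity)]
          ring_nf
  rw [hF]
  refine ((integrable_rpow_neg_one_add_norm_sq (r := 2 * (n + 1 - s)) (by linarith)).const_mul
    (C ^ 2)).mono' (by fun_prop : Measurable _).aestronglyMeasurable
    (Filter.Eventually.of_forall fun w => ?_)
  rw [norm_of_nonneg (by positivity)]
  exact mul_le_mul_of_nonneg_left (hbound w) (sq_nonneg C)

end FourierExpNegNorm

theorem stmt2_general (s : ℝ) (hs2 : s < 2) :
    MeasureTheory.Integrable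
      (fun ζ : EuclideanSpace ℝ (Fin 2) =>
        (1 + ‖ζ‖ ^ 2) ^ s *
          ‖𝓕 (fun p : EuclideanSpace ℝ (Fin 2) => (Real.exp (-‖p‖) : ℂ)) ζ‖ ^ 2) := by
  refine integrable_one_add_norm_sq_rpow_mul_sq_norm_fourier_exp_neg_norm ?_
  norm_num [finrank_euclideanSpace_fin, hs2]

/-- The function `φ(x,y) = e^{-√(x²+y²)}` belongs to `H^s(ℝ²)` for every `0 < s < 2`,
where membership in `H^s` is expressed on the Fourier side:
`(1+|ζ|²)^{s/2} 𝓕φ(ζ) ∈ L²`, i.e. `(1+|ζ|²)^s ‖𝓕φ(ζ)‖²` is integrable. -/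
theorem stmt2 (s : ℝ) (hs0 : 0 < s) (hs2 : s < 2) :
    MeasureTheory.Integrable
      (fun ζ : EuclideanSpace ℝ (Fin 2) =>
        (1 + ‖ζ‖ ^ 2) ^ s *
          ‖𝓕 (fun p : EuclideanSpace ℝ (Fin 2) => (Real.exp (-‖p‖) : ℂ)) ζ‖ ^ 2) :=
  stmt2_general s hs2
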